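/- Let B be a left skew brace having a finite chief series 0 = I₀ ≤ I₁ ≤ … ≤ I_n = B. Then the Fitting ideal Fit(B) equals the intersection ⋂_{k=1}^{n} C_B(I_k/I_{k-1}) of the centralisers in B of the factors of this series. -/

import Mathlib

universe u

/-- A left skew brace: a set with two group structures `(B,+)` and `(B,·)` sharing the
same identity element, satisfying `a·(b+c) = a·b - a + a·c`. -/
class SkewBrace (B : Type u) extends AddGroup B, Group B where
  zero_eq_one : (0 : B) = 1
  skew_distrib : ∀ a b c : B, a * (b + c) = a * b + (-a + a * c)

namespace SkewBrace

variable {B : Type u} [SkewBrace B]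

/-- The star product `a ∗ b = -a + a·b - b`. -/
def sbStar (a b : B) : B := -a + a * b + -b

/-- The additive commutator `[a,b]₊ = -a - b + a + b`. -/
def addCommutator (a b : B) : B := -a + -b + a + b

/-- The multiplicative commutator `[a,b]· = a⁻¹b⁻¹ab`. -/
def mulCommutator (a b : B) : B := a⁻¹ * b⁻¹ * a * b

/-- A subbrace: a subset that is a subgroup of both `(B,+)` and `(B,·)`. -/
structure IsSubbrace (S : Set B) : Prop where
  zero_mem : (0 : B) ∈ S
  add_mem : ∀ ⦃a b : B⦄, a ∈ S → b ∈ S → a + b ∈ S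
  neg_mem : ∀ ⦃a : B⦄, a ∈ S → -a ∈ S
  mul_mem : ∀ ⦃a b : B⦄, a ∈ S → b ∈ S → a * b ∈ S
  inv_mem : ∀ ⦃a : B⦄, a ∈ S → a⁻¹ ∈ S

/-- `J` is an ideal of the subbrace `S`: a subbrace of `S`, normal in `(S,+)` and
`(S,·)`, with `S ∗ J ⊆ J` and `J ∗ S ⊆ J`. -/
structure IsIdealIn (S J : Set B) : Prop where
  subset : J ⊆ S
  isSubbrace : IsSubbrace J
  add_conj_mem : ∀ ⦃b : B⦄, b ∈ S → ∀ ⦃a : B⦄, a ∈ J → b + a + -b ∈ J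
  mul_conj_mem : ∀ ⦃b : B⦄, b ∈ S → ∀ ⦃a : B⦄, a ∈ J → b * a * b⁻¹ ∈ J
  star_mem_left : ∀ ⦃b : B⦄, b ∈ S → ∀ ⦃a : B⦄, a ∈ J → sbStar b a ∈ J
  star_mem_right : ∀ ⦃a : B⦄, a ∈ J → ∀ ⦃b : B⦄, b ∈ S → sbStar a b ∈ J

/-- An ideal of the brace `B`. -/
def IsIdeal (J : Set B) : Prop := IsIdealIn (Set.univ : Set B) J

/-- A left ideal: a subbrace `L` with `B ∗ L ⊆ L`. -/
structure IsLeftIdeal (L : Set B) : Prop where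
  isSubbrace : IsSubbrace L
  star_mem_left : ∀ (b : B), ∀ ⦃a : B⦄, a ∈ L → sbStar b a ∈ L

/-- The ideal of `B` generated by a subset `E`. -/
def idealClosure (E : Set B) : Set B := ⋂₀ {I : Set B | IsIdeal I ∧ E ⊆ I}

/-- The subbrace of `B` generated by a subset `E`. -/
def subbraceClosure (E : Set B) : Set B := ⋂₀ {S : Set B | IsSubbrace S ∧ E ⊆ S}

/-- The set `X_{I,J} = [I,J]₊ ∪ [I,J]· ∪ {i·j - (i+j) : i ∈ I, j ∈ J}`. -/
def commSet (I J : Set B) : Set B :=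
  (AddSubgroup.closure {x : B | ∃ i ∈ I, ∃ j ∈ J, x = addCommutator i j} : Set B) ∪
    (Subgroup.closure {x : B | ∃ i ∈ I, ∃ j ∈ J, x = mulCommutator i j} : Set B) ∪
    {x : B | ∃ i ∈ I, ∃ j ∈ J, x = i * j + -(i + j)}

/-- The commutator ideal `[I,J]^B`: the ideal of `B` generated by `X_{I,J}`. -/
def commIdeal (I J : Set B) : Set B := idealClosure (commSet I J)

/-- The set `X ∗ Y = {x ∗ y : x ∈ X, y ∈ Y}`. -/
def starSet (X Y : Set B) : Set B := {z : B | ∃ x ∈ X, ∃ y ∈ Y, z = sbStar x y}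

/-- The centre of the subbrace `S`. -/
def centreIn (S : Set B) : Set B :=
  {a ∈ S | ∀ b ∈ S, a + b = b + a ∧ a + b = a * b ∧ a + b = b * a}

/-- The centre `ζ(B)` of the brace `B`. -/
def centre (B : Type u) [SkewBrace B] : Set B := centreIn (Set.univ : Set B)

/-- For ideals `J ≤ I` of the subbrace `S`: `I/J` is a central factor of `S`,
i.e. `I/J ≤ ζ(S/J)`. -/
def IsCentralFactorIn (S J I : Set B) : Prop :=
  ∀ ⦃a : B⦄, a ∈ I → ∀ ⦃b : B⦄, b ∈ S →
    -(a + b) + (b + a) ∈ J ∧ -(a + b) + a * b ∈ J ∧ -(a + b) + b * a ∈ J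

/-- The subbrace `S` is centrally nilpotent of class at most `n`: there is a chain of
ideals `0 = I₀ ≤ I₁ ≤ … ≤ Iₙ = S` of `S` with `I_{k+1}/I_k ≤ ζ(S/I_k)`. -/
def CentrallyNilpotentInOfClassLE (S : Set B) (n : ℕ) : Prop :=
  ∃ I : ℕ → Set B, I 0 = {0} ∧ I n = S ∧
    (∀ k ≤ n, IsIdealIn S (I k)) ∧
    (∀ k < n, I k ⊆ I (k + 1)) ∧
    (∀ k < n, IsCentralFactorIn S (I k) (I (k + 1)))

/-- The subbrace `S` is centrally nilpotent. -/
def CentrallyNilpotentIn (S : Set B) : Prop := ∃ n : ℕ, CentrallyNilpotentInOfClassLE S n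

/-- The brace `B` is centrally nilpotent. -/
def CentrallyNilpotent (B : Type u) [SkewBrace B] : Prop :=
  CentrallyNilpotentIn (Set.univ : Set B)

/-- The brace `B` is locally centrally-nilpotent: every finitely generated subbrace is
centrally nilpotent. -/
def LocallyCentrallyNilpotent (B : Type u) [SkewBrace B] : Prop :=
  ∀ E : Finset B, CentrallyNilpotentIn (subbraceClosure (E : Set B))

/-- The (finite) upper central series of `B`: `ζ₀(B) = 0` and
`ζ_{n+1}(B)/ζ_n(B) = ζ(B/ζ_n(B))`. -/
def zetaNat (B : Type u) [SkewBrace B] : ℕ → Set B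
  | 0 => {0}
  | n + 1 =>
    {a : B | ∀ b : B, -(a + b) + (b + a) ∈ zetaNat B n ∧
      -(a + b) + a * b ∈ zetaNat B n ∧ -(a + b) + b * a ∈ zetaNat B n}

/-- The transfinite upper central series of `B`. -/
noncomputable def zetaOrd (B : Type u) [SkewBrace B] (o : Ordinal.{u}) : Set B :=
  Ordinal.limitRecOn o ({0} : Set B)
    (fun _ Z =>
      {a : B | ∀ b : B, -(a + b) + (b + a) ∈ Z ∧ -(a + b) + a * b ∈ Z ∧ -(a + b) + b * a ∈ Z})
    (fun o _ ih => ⋃ (β : {β : Ordinal.{u} // β < o}), ih β.1 β.2)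

/-- The brace `B` is hypercentral: the upper central series reaches `B`. -/
def Hypercentral (B : Type u) [SkewBrace B] : Prop :=
  ∃ o : Ordinal.{u}, zetaOrd B o = Set.univ

/-- The largest ideal of `B` contained in `C`. -/
def idealCore (C : Set B) : Set B := ⋃₀ {I : Set B | IsIdeal I ∧ I ⊆ C}

/-- The lower `B`-central series of an ideal `I`:
`lowerCentralB I n = Γ_{n+1}(I)^B`, so `Γ₁(I)^B = I` and `Γ_{n+1}(I)^B = [Γ_n(I)^B, I]^B`. -/
def lowerCentralB (I : Set B) : ℕ → Set B
  | 0 => I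
  | n + 1 => commIdeal (lowerCentralB I n) I

/-- `I` is a `B`-centrally nilpotent ideal. -/
def BCentrallyNilpotent (I : Set B) : Prop := ∃ n : ℕ, lowerCentralB I n = {0}

/-- The derived series of an ideal with respect to `B`. -/
def derivedB (I : Set B) : ℕ → Set B
  | 0 => I
  | n + 1 => commIdeal (derivedB I n) (derivedB I n)

/-- The preimages in `B` of the derived series of `I/F` with respect to `B/F`. -/
def derivedModB (F I : Set B) : ℕ → Set B
  | 0 => I
  | n + 1 => idealClosure (commSet (derivedModB F I n) (derivedModB F I n) ∪ F)

/-- The Fitting ideal of `B`: the ideal generated by all `B`-centrally nilpotent ideals. -/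
def FitIdeal (B : Type u) [SkewBrace B] : Set B :=
  idealClosure (⋃₀ {I : Set B | IsIdeal I ∧ BCentrallyNilpotent I})

/-- The centraliser of an ideal `I`: the largest ideal `C` with `[C,I]^B = 0`. -/
def idealCentraliser (I : Set B) : Set B :=
  ⋃₀ {C : Set B | IsIdeal C ∧ commIdeal C I ⊆ {0}}

/-- The centraliser of a chief factor `Itop/Ibot`: the largest ideal `C` of `B` with
`[C, Itop]^B ≤ Ibot`. -/
def factorCentraliser (Itop Ibot : Set B) : Set B :=
  ⋃₀ {C : Set B | IsIdeal C ∧ commIdeal C Itop ⊆ Ibot}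

/-- A maximal left ideal of `B`. -/
def IsMaximalLeftIdeal (L : Set B) : Prop :=
  IsLeftIdeal L ∧ L ≠ Set.univ ∧
    ∀ L' : Set B, IsLeftIdeal L' → L ⊆ L' → L' = L ∨ L' = Set.univ

/-- The Frattini ideal of `B`. -/
def FratIdeal (B : Type u) [SkewBrace B] : Set B :=
  (⋂₀ {L : Set B | IsMaximalLeftIdeal L}) ∩ FitIdeal B

/-- The additive torsion set `T₊(B)`. -/
def addTorsion (B : Type u) [SkewBrace B] : Set B := {a : B | ∃ n : ℕ, 0 < n ∧ n • a = 0}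

/-- The multiplicative torsion set `T·(B)`. -/
def mulTorsion (B : Type u) [SkewBrace B] : Set B := {a : B | ∃ n : ℕ, 0 < n ∧ a ^ n = 1}

/-- The order of an element of a brace: the cardinality of the subbrace it generates
(`0` if infinite). -/
noncomputable def elemOrder (a : B) : ℕ := Nat.card ↥(subbraceClosure ({a} : Set B))

/-- `a` is a `π`-element: it is periodic and its order is a `π`-number. -/
def IsPiElement (π : Set ℕ) (a : B) : Prop :=
  0 < elemOrder a ∧ ∀ p : ℕ, p.Prime → p ∣ elemOrder a → p ∈ π

/-- The order of the coset `a + J` in the quotient brace modulo the ideal `J`: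
the number of cosets of `J` in the subbrace generated by `a` together with `J`. -/
noncomputable def elemOrderMod (J : Set B) (a : B) : ℕ :=
  Nat.card ↥((fun x : B => {y : B | -x + y ∈ J}) '' subbraceClosure ({a} ∪ J))

/-- The coset of `a` modulo the ideal `J` is a `π`-element of the quotient brace. -/
def IsPiElementMod (π : Set ℕ) (J : Set B) (a : B) : Prop :=
  0 < elemOrderMod J a ∧ ∀ p : ℕ, p.Prime → p ∣ elemOrderMod J a → p ∈ π

/-- A subideal: a finite chain `S = C₀ ⊴ C₁ ⊴ … ⊴ Cₙ = B`. -/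
def IsSubideal (S : Set B) : Prop :=
  ∃ (n : ℕ) (C : ℕ → Set B), C 0 = S ∧ C n = Set.univ ∧
    (∀ k ≤ n, IsSubbrace (C k)) ∧ ∀ k < n, IsIdealIn (C (k + 1)) (C k)

/-- An ascendant subbrace: an ordinal-indexed ascending chain from `S` to `B`. -/
def IsAscendant (S : Set B) : Prop :=
  ∃ (l : Ordinal.{u}) (C : Ordinal.{u} → Set B), C 0 = S ∧ C l = Set.univ ∧
    (∀ α ≤ l, IsSubbrace (C α)) ∧
    (∀ α < l, IsIdealIn (C (α + 1)) (C α)) ∧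
    ∀ μ ≤ l, Order.IsSuccLimit μ → C μ = ⋃ β < μ, C β

/-- A serial subbrace: there is a complete chain of subbraces containing `S` and `B`
in which each member is an ideal of its immediate successor. -/
def IsSerial (S : Set B) : Prop :=
  ∃ 𝒞 : Set (Set B), S ∈ 𝒞 ∧ Set.univ ∈ 𝒞 ∧
    (∀ D ∈ 𝒞, IsSubbrace D) ∧
    (∀ D ∈ 𝒞, ∀ E ∈ 𝒞, D ⊆ E ∨ E ⊆ D) ∧
    (∀ 𝒟 ⊆ 𝒞, 𝒟.Nonempty → ⋃₀ 𝒟 ∈ 𝒞 ∧ ⋂₀ 𝒟 ∈ 𝒞) ∧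
    ∀ D ∈ 𝒞, ∀ E ∈ 𝒞, D ⊂ E → (∀ F ∈ 𝒞, ¬(D ⊂ F ∧ F ⊂ E)) → IsIdealIn E D

/-- `S` is a maximal `p`-subgroup of `(B,+)`. -/
def IsMaxAddPSubgroup (p : ℕ) (S : AddSubgroup B) : Prop :=
  (∀ a ∈ S, ∃ k : ℕ, p ^ k • a = 0) ∧
    ∀ T : AddSubgroup B, (∀ a ∈ T, ∃ k : ℕ, p ^ k • a = 0) → S ≤ T → T = S

/-- `S` is a maximal `p`-subgroup of `(B,·)`. -/
def IsMaxMulPSubgroup (p : ℕ) (S : Subgroup B) : Prop :=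
  (∀ a ∈ S, ∃ k : ℕ, a ^ p ^ k = 1) ∧
    ∀ T : Subgroup B, (∀ a ∈ T, ∃ k : ℕ, a ^ p ^ k = 1) → S ≤ T → T = S

/-- Formal 2-polynomials of a brace: terms in two variables built from `+`, `-`, `·`,
inverse and the constant `0`. -/
inductive Poly2 : Type
  | X : Poly2
  | Y : Poly2
  | zero : Poly2
  | add : Poly2 → Poly2 → Poly2
  | neg : Poly2 → Poly2
  | mul : Poly2 → Poly2 → Poly2
  | inv : Poly2 → Poly2

/-- Evaluation of a formal 2-polynomial in a brace. -/
def Poly2.eval : Poly2 → B → B → B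
  | .X, a, _ => a
  | .Y, _, b => b
  | .zero, _, _ => 0
  | .add p q, a, b => p.eval a b + q.eval a b
  | .neg p, a, b => -(p.eval a b)
  | .mul p q, a, b => p.eval a b * q.eval a b
  | .inv p, a, b => (p.eval a b)⁻¹

/-- A 2-polynomial is absorbing if it vanishes whenever one variable is `0`. -/
def Poly2.Absorbing (p : Poly2) (B : Type u) [SkewBrace B] : Prop :=
  (∀ x : B, p.eval x (0 : B) = 0) ∧ ∀ y : B, p.eval (0 : B) y = 0

end SkewBrace

open SkewBrace

section FitAux
open SkewBrace

variable {B : Type u} [SkewBrace B]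

private def lamB (a b : B) : B := -a + a * b

private lemma one_eq_zero : (1 : B) = 0 := SkewBrace.zero_eq_one.symm

private lemma mul_zero' (a : B) : a * (0 : B) = a := by
  rw [SkewBrace.zero_eq_one, mul_one]

private lemma zero_mul' (a : B) : (0 : B) * a = a := by
  rw [SkewBrace.zero_eq_one, one_mul]

private lemma mul_eq_add_lam (a b : B) : a * b = a + lamB a b := by
  simp [lamB]

private lemma lam_add (a b c : B) : lamB a (b + c) = lamB a b + lamB a c := by
  simp [lamB, SkewBrace.skew_distrib a b c, add_assoc]

private lemma lam_zero (a : B) : lamB a 0 = 0 := by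
  simp [lamB, mul_zero']

private lemma lam_neg (a b : B) : lamB a (-b) = -(lamB a b) := by
  have h : lamB a b + lamB a (-b) = 0 := by
    rw [← lam_add, add_neg_cancel, lam_zero]
  exact (neg_eq_of_add_eq_zero_right h).symm

private lemma mul_neg' (a b : B) : a * (-b) = a + (-(a * b) + a) := by
  have h := SkewBrace.skew_distrib a b (-b)
  rw [add_neg_cancel, mul_zero'] at h
  have h2 : -a + a * (-b) = -(a*b) + a := by
    have h3 := congrArg (fun z => -(a*b) + z) h.symm
    simpa [add_assoc] using h3
  rw [← h2, add_neg_cancel_left]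

private lemma lam_mul (a b c : B) : lamB (a * b) c = lamB a (lamB b c) := by
  simp only [lamB]
  rw [SkewBrace.skew_distrib a (-b) (b * c), mul_neg', mul_assoc]
  simp [add_assoc]

private lemma lam_one (b : B) : lamB (1 : B) b = b := by
  simp [lamB, one_eq_zero, zero_mul']

private lemma lam_lam_inv (a b : B) : lamB a (lamB a⁻¹ b) = b := by
  rw [← lam_mul, mul_inv_cancel, lam_one]

private lemma lam_inv_lam (a b : B) : lamB a⁻¹ (lamB a b) = b := by
  rw [← lam_mul, inv_mul_cancel, lam_one]

private lemma inv_eq_neg_lam (a : B) : a⁻¹ = -(lamB a⁻¹ a) := by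
  have h : a⁻¹ + lamB a⁻¹ a = 0 := by
    rw [← mul_eq_add_lam, inv_mul_cancel, one_eq_zero]
  exact (neg_eq_of_add_eq_zero_left h).symm

private lemma sbStar_eq (a b : B) : sbStar a b = lamB a b + -b := by
  simp [sbStar, lamB, add_assoc]

-- ideal interface
private lemma id_zero {S : Set B} (h : IsIdeal S) : (0 : B) ∈ S := h.isSubbrace.zero_mem

private lemma id_add {S : Set B} (h : IsIdeal S) {a b : B} (ha : a ∈ S) (hb : b ∈ S) :
    a + b ∈ S := h.isSubbrace.add_mem ha hb

private lemma id_neg {S : Set B} (h : IsIdeal S) {a : B} (ha : a ∈ S) : -a ∈ S :=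
  h.isSubbrace.neg_mem ha

private lemma id_mul {S : Set B} (h : IsIdeal S) {a b : B} (ha : a ∈ S) (hb : b ∈ S) :
    a * b ∈ S := h.isSubbrace.mul_mem ha hb

private lemma id_inv {S : Set B} (h : IsIdeal S) {a : B} (ha : a ∈ S) : a⁻¹ ∈ S :=
  h.isSubbrace.inv_mem ha

private lemma id_addconj {S : Set B} (h : IsIdeal S) (b : B) {a : B} (ha : a ∈ S) :
    b + a + -b ∈ S := h.add_conj_mem (Set.mem_univ b) ha

private lemma id_mulconj {S : Set B} (h : IsIdeal S) (b : B) {a : B} (ha : a ∈ S) :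
    b * a * b⁻¹ ∈ S := h.mul_conj_mem (Set.mem_univ b) ha

private lemma id_starL {S : Set B} (h : IsIdeal S) (b : B) {a : B} (ha : a ∈ S) :
    sbStar b a ∈ S := h.star_mem_left (Set.mem_univ b) ha

private lemma id_starR {S : Set B} (h : IsIdeal S) {a : B} (ha : a ∈ S) (b : B) :
    sbStar a b ∈ S := h.star_mem_right ha (Set.mem_univ b)

private lemma id_lam {S : Set B} (h : IsIdeal S) (b : B) {a : B} (ha : a ∈ S) :
    lamB b a ∈ S := by
  have e : lamB b a = sbStar b a + a := by simp [sbStar_eq, add_assoc]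
  rw [e]; exact id_add h (id_starL h b ha) ha

private lemma id_lamsub {S : Set B} (h : IsIdeal S) {a : B} (ha : a ∈ S) (b : B) :
    lamB a b + -b ∈ S := by
  rw [← sbStar_eq]; exact id_starR h ha b

private lemma mem_rot {S : Set B} (h : IsIdeal S) {u v : B} (huv : u + v ∈ S) :
    v + u ∈ S := by
  have h2 := id_addconj h v huv
  have e : v + (u + v) + -v = v + u := by simp [add_assoc]
  rwa [e] at h2

-- congruence modulo an ideal
private def cg (L : Set B) (p q : B) : Prop := -p + q ∈ L

private lemma cg_refl {L : Set B} (h : IsIdeal L) (p : B) : cg L p p := by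
  simp [cg, id_zero h]

private lemma cg_symm {L : Set B} (h : IsIdeal L) {p q : B} (hc : cg L p q) : cg L q p := by
  have h2 := id_neg h hc
  rwa [neg_add_rev, neg_neg] at h2

private lemma cg_trans {L : Set B} (h : IsIdeal L) {p q r : B}
    (h1 : cg L p q) (h2 : cg L q r) : cg L p r := by
  have h3 := id_add h h1 h2
  have e : -p + q + (-q + r) = -p + r := by simp [add_assoc]
  rwa [e] at h3

private lemma cg_addl {L : Set B} (w : B) {p q : B} (hc : cg L p q) : cg L (w + p) (w + q) := by
  have e : -(w + p) + (w + q) = -p + q := by simp [neg_add_rev, add_assoc]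
  show -(w + p) + (w + q) ∈ L
  rw [e]; exact hc

private lemma cg_addr {L : Set B} (h : IsIdeal L) (w : B) {p q : B} (hc : cg L p q) :
    cg L (p + w) (q + w) := by
  have h2 := id_addconj h (-w) hc
  rw [neg_neg] at h2
  have e : -w + (-p + q) + w = -(p + w) + (q + w) := by simp [neg_add_rev, add_assoc]
  show -(p + w) + (q + w) ∈ L
  rwa [e] at h2

private lemma cg_neg {L : Set B} (h : IsIdeal L) {p q : B} (hc : cg L p q) :
    cg L (-p) (-q) := by
  have h2 := mem_rot h (cg_symm h hc)
  show -(-p) + -q ∈ L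
  rwa [neg_neg]

private lemma inv_mul_eq_lam (p q : B) : p⁻¹ * q = lamB p⁻¹ (-p + q) := by
  rw [lam_add, lam_neg]
  have h1 : lamB p⁻¹ p = -p⁻¹ := by
    simp [lamB, inv_mul_cancel, one_eq_zero]
  rw [h1, neg_neg]
  simp [lamB, add_assoc]

private lemma neg_add_eq_lam (p q : B) : -p + q = lamB p (p⁻¹ * q) := by
  rw [inv_mul_eq_lam, lam_lam_inv]

private lemma cg_iff_inv {L : Set B} (h : IsIdeal L) {p q : B} :
    cg L p q ↔ p⁻¹ * q ∈ L := by
  constructor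
  · intro hc
    rw [inv_mul_eq_lam]
    exact id_lam h _ hc
  · intro hm
    show -p + q ∈ L
    rw [neg_add_eq_lam]
    exact id_lam h _ hm

private lemma neg_mul_add_mul (w p q : B) : -(w * p) + w * q = lamB w (-p + q) := by
  rw [lam_add, lam_neg, mul_eq_add_lam w p, mul_eq_add_lam w q]
  simp [neg_add_rev, add_assoc]

private lemma cg_mull {L : Set B} (h : IsIdeal L) (w : B) {p q : B} (hc : cg L p q) :
    cg L (w * p) (w * q) := by
  show -(w * p) + w * q ∈ L
  rw [neg_mul_add_mul]
  exact id_lam h w hc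

private lemma cg_mulr {L : Set B} (h : IsIdeal L) (w : B) {p q : B} (hc : cg L p q) :
    cg L (p * w) (q * w) := by
  rw [cg_iff_inv h]
  have h2 := id_mulconj h w⁻¹ ((cg_iff_inv h).mp hc)
  rw [inv_inv] at h2
  have e : w⁻¹ * (p⁻¹ * q) * w = (p * w)⁻¹ * (q * w) := by
    simp [mul_inv_rev, mul_assoc]
  rwa [e] at h2

private lemma cg_mem {L : Set B} {p q : B} (hc : cg L p q) (hp : p ∈ L)
    (h : IsIdeal L) : q ∈ L := by
  have h2 := id_add h hp hc
  rwa [add_neg_cancel_left] at h2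

private lemma add_neg_mem_iff {L : Set B} (h : IsIdeal L) {p q : B} :
    p + -q ∈ L ↔ cg L q p := by
  constructor
  · intro hm; exact mem_rot h hm
  · intro hc; exact mem_rot h hc

-- basic ideals
private lemma isIdeal_sInter {S : Set (Set B)} (h : ∀ T ∈ S, IsIdeal T) :
    IsIdeal (⋂₀ S) := by
  refine ⟨fun a _ => Set.mem_univ a, ⟨?_, ?_, ?_, ?_, ?_⟩, ?_, ?_, ?_, ?_⟩
  · exact fun T hT => id_zero (h T hT)
  · exact fun a b ha hb T hT => id_add (h T hT) (ha T hT) (hb T hT)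
  · exact fun a ha T hT => id_neg (h T hT) (ha T hT)
  · exact fun a b ha hb T hT => id_mul (h T hT) (ha T hT) (hb T hT)
  · exact fun a ha T hT => id_inv (h T hT) (ha T hT)
  · exact fun b _ a ha T hT => id_addconj (h T hT) b (ha T hT)
  · exact fun b _ a ha T hT => id_mulconj (h T hT) b (ha T hT)
  · exact fun b _ a ha T hT => id_starL (h T hT) b (ha T hT)
  · exact fun a ha b _ T hT => id_starR (h T hT) (ha T hT) b

private lemma isIdeal_iInter {ι : Sort*} {f : ι → Set B} (h : ∀ i, IsIdeal (f i)) :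
    IsIdeal (⋂ i, f i) := by
  refine ⟨fun a _ => Set.mem_univ a, ⟨?_, ?_, ?_, ?_, ?_⟩, ?_, ?_, ?_, ?_⟩ <;>
    simp only [Set.mem_iInter]
  · exact fun i => id_zero (h i)
  · exact fun a b ha hb i => id_add (h i) (ha i) (hb i)
  · exact fun a ha i => id_neg (h i) (ha i)
  · exact fun a b ha hb i => id_mul (h i) (ha i) (hb i)
  · exact fun a ha i => id_inv (h i) (ha i)
  · exact fun b _ a ha i => id_addconj (h i) b (ha i)
  · exact fun b _ a ha i => id_mulconj (h i) b (ha i)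
  · exact fun b _ a ha i => id_starL (h i) b (ha i)
  · exact fun a ha b _ i => id_starR (h i) (ha i) b

private lemma isIdeal_univ : IsIdeal (Set.univ : Set B) := by
  refine ⟨fun a _ => Set.mem_univ a, ⟨?_, ?_, ?_, ?_, ?_⟩, ?_, ?_, ?_, ?_⟩ <;>
    intros <;> exact Set.mem_univ _

private lemma isIdeal_zero : IsIdeal ({0} : Set B) := by
  refine ⟨?_, ⟨?_, ?_, ?_, ?_, ?_⟩, ?_, ?_, ?_, ?_⟩
  · intro a _; exact Set.mem_univ a
  · rfl
  · rintro a b rfl rfl; simp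
  · rintro a rfl; simp
  · rintro a b rfl rfl; simp [mul_zero']
  · rintro a rfl
    simp only [Set.mem_singleton_iff]
    rw [SkewBrace.zero_eq_one, inv_one, ← SkewBrace.zero_eq_one]
  · rintro b _ a rfl; simp
  · rintro b _ a rfl
    simp only [Set.mem_singleton_iff]
    rw [mul_zero', mul_inv_cancel, ← SkewBrace.zero_eq_one]
  · rintro b _ a rfl
    simp only [Set.mem_singleton_iff, sbStar]
    simp [mul_zero']
  · rintro a rfl b _
    simp only [Set.mem_singleton_iff, sbStar]
    simp [zero_mul']

private lemma isIdeal_idealClosure (E : Set B) : IsIdeal (idealClosure E) :=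
  isIdeal_sInter (fun _ hT => hT.1)

private lemma subset_idealClosure (E : Set B) : E ⊆ idealClosure E :=
  fun a ha => Set.mem_sInter.2 (fun _ hT => hT.2 ha)

private lemma idealClosure_min {E K : Set B} (hK : IsIdeal K) (hE : E ⊆ K) :
    idealClosure E ⊆ K := Set.sInter_subset_of_mem ⟨hK, hE⟩

-- bundled subgroups of an ideal
private def sbAdd {S : Set B} (h : IsSubbrace S) : AddSubgroup B where
  carrier := S
  add_mem' := fun ha hb => h.add_mem ha hb
  zero_mem' := h.zero_mem
  neg_mem' := fun ha => h.neg_mem ha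

private def sbMul {S : Set B} (h : IsSubbrace S) : Subgroup B where
  carrier := S
  mul_mem' := fun ha hb => h.mul_mem ha hb
  one_mem' := by rw [← SkewBrace.zero_eq_one]; exact h.zero_mem
  inv_mem' := fun ha => h.inv_mem ha

private lemma commSet_subset_iff {C I L : Set B} (hL : IsIdeal L) :
    commSet C I ⊆ L ↔ ∀ a ∈ C, ∀ x ∈ I,
      addCommutator a x ∈ L ∧ mulCommutator a x ∈ L ∧ a * x + -(a + x) ∈ L := by
  unfold commSet
  rw [Set.union_subset_iff, Set.union_subset_iff]
  constructor
  · rintro ⟨⟨h1, h2⟩, h3⟩ a ha x hx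
    exact ⟨h1 (AddSubgroup.subset_closure ⟨a, ha, x, hx, rfl⟩),
           h2 (Subgroup.subset_closure ⟨a, ha, x, hx, rfl⟩),
           h3 ⟨a, ha, x, hx, rfl⟩⟩
  · intro hgen
    refine ⟨⟨?_, ?_⟩, ?_⟩
    · intro z hz
      refine (AddSubgroup.closure_le (sbAdd hL.isSubbrace)).mpr ?_ hz
      rintro w ⟨i, hi, j, hj, rfl⟩
      exact (hgen i hi j hj).1
    · intro z hz
      refine (Subgroup.closure_le (sbMul hL.isSubbrace)).mpr ?_ hz
      rintro w ⟨i, hi, j, hj, rfl⟩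
      exact (hgen i hi j hj).2.1
    · rintro w ⟨i, hi, j, hj, rfl⟩
      exact (hgen i hi j hj).2.2

private lemma commIdeal_subset_iff_gen {C I L : Set B} (hL : IsIdeal L) :
    commIdeal C I ⊆ L ↔ ∀ a ∈ C, ∀ x ∈ I,
      addCommutator a x ∈ L ∧ mulCommutator a x ∈ L ∧ a * x + -(a + x) ∈ L := by
  rw [← commSet_subset_iff hL]
  unfold commIdeal
  exact ⟨fun h => (subset_idealClosure _).trans h, fun h => idealClosure_min hL h⟩

private def relB (L : Set B) (a x : B) : Prop :=
  cg L (x + a) (a + x) ∧ cg L (x * a) (a * x) ∧ cg L (a + x) (a * x)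

private lemma addComm_eq (a x : B) : addCommutator a x = -(x + a) + (a + x) := by
  simp [SkewBrace.addCommutator, neg_add_rev, add_assoc]

private lemma mulComm_eq (a x : B) : mulCommutator a x = (x * a)⁻¹ * (a * x) := by
  simp [mulCommutator, mul_inv_rev, mul_assoc]

private lemma commIdeal_subset_iff_rel {C I L : Set B} (hL : IsIdeal L) :
    commIdeal C I ⊆ L ↔ ∀ a ∈ C, ∀ x ∈ I, relB L a x := by
  rw [commIdeal_subset_iff_gen hL]
  refine forall₂_congr (fun a _ => forall₂_congr (fun x _ => ?_))
  unfold relB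
  rw [addComm_eq, mulComm_eq, ← cg_iff_inv hL, add_neg_mem_iff hL]
  exact Iff.rfl

private lemma relB_symm {L : Set B} (hL : IsIdeal L) {a x : B} (h : relB L a x) :
    relB L x a := by
  obtain ⟨h1, h2, h3⟩ := h
  refine ⟨cg_symm hL h1, cg_symm hL h2, ?_⟩
  exact cg_trans hL h1 (cg_trans hL h3 (cg_symm hL h2))

private lemma isIdeal_commIdeal (C I : Set B) : IsIdeal (commIdeal C I) :=
  isIdeal_idealClosure _

private lemma comm_symm_subset (C I : Set B) : commIdeal C I ⊆ commIdeal I C := by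
  rw [commIdeal_subset_iff_rel (isIdeal_commIdeal I C)]
  intro a ha x hx
  exact relB_symm (isIdeal_commIdeal I C)
    ((commIdeal_subset_iff_rel (isIdeal_commIdeal I C)).mp (subset_refl _) x hx a ha)

private lemma comm_mono {C C' I I' : Set B} (hC : C ⊆ C') (hI : I ⊆ I') :
    commIdeal C I ⊆ commIdeal C' I' := by
  rw [commIdeal_subset_iff_rel (isIdeal_commIdeal C' I')]
  intro a ha x hx
  exact (commIdeal_subset_iff_rel (isIdeal_commIdeal C' I')).mp (subset_refl _)
    a (hC ha) x (hI hx)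

private lemma comm_subset_right {I : Set B} (hI : IsIdeal I) (C : Set B) :
    commIdeal C I ⊆ I := by
  rw [commIdeal_subset_iff_rel hI]
  intro a _ x hx
  have c1 : cg I (x + a) (a + x) := by
    show -(x + a) + (a + x) ∈ I
    have h2 := id_addconj hI (-a) (id_neg hI hx)
    rw [neg_neg] at h2
    have h3 := id_add hI h2 hx
    have e : -a + -x + a + x = -(x + a) + (a + x) := by simp [neg_add_rev, add_assoc]
    rwa [e] at h3
  have c3 : cg I (a + x) (a * x) := by
    show -(a + x) + a * x ∈ I
    have h2 := id_add hI (id_neg hI hx) (id_lam hI a hx)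
    have e : -x + lamB a x = -(a + x) + a * x := by
      rw [mul_eq_add_lam]; simp [neg_add_rev, add_assoc]
    rwa [e] at h2
  have c0 : cg I (x * a) (x + a) := by
    show -(x * a) + (x + a) ∈ I
    have h2 : a + -(lamB x a) ∈ I := by
      have h4 := id_neg hI (id_lamsub hI hx a)
      rwa [neg_add_rev, neg_neg] at h4
    have h3 := mem_rot hI h2
    have e : -(lamB x a) + a = -(x * a) + (x + a) := by
      rw [mul_eq_add_lam]; simp [neg_add_rev, add_assoc]
    rwa [e] at h3
  exact ⟨c1, cg_trans hI c0 (cg_trans hI c1 c3), c3⟩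

private lemma comm_zero_left {L : Set B} (hL : IsIdeal L) (X : Set B) :
    commIdeal ({0} : Set B) X ⊆ L := by
  rw [commIdeal_subset_iff_rel hL]
  rintro a rfl x _
  refine ⟨?_, ?_, ?_⟩
  · rw [add_zero, zero_add]; exact cg_refl hL x
  · rw [mul_zero', zero_mul']; exact cg_refl hL x
  · rw [zero_add, zero_mul']; exact cg_refl hL x

-- join of two ideals
private def joinSet (C D : Set B) : Set B := {z : B | ∃ c ∈ C, ∃ d ∈ D, z = c + d}

private lemma mem_join_left {C D : Set B} (hD : IsIdeal D) {c : B} (hc : c ∈ C) :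
    c ∈ joinSet C D := ⟨c, hc, 0, id_zero hD, (add_zero c).symm⟩

private lemma mem_join_right {C D : Set B} (hC : IsIdeal C) {d : B} (hd : d ∈ D) :
    d ∈ joinSet C D := ⟨0, id_zero hC, d, hd, (zero_add d).symm⟩

private lemma join_mono {C C' D D' : Set B} (hC : C ⊆ C') (hD : D ⊆ D') :
    joinSet C D ⊆ joinSet C' D' := by
  rintro z ⟨c, hc, d, hd, rfl⟩
  exact ⟨c, hC hc, d, hD hd, rfl⟩

private lemma join_subset {C D E : Set B} (hE : IsIdeal E) (hC : C ⊆ E) (hD : D ⊆ E) :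
    joinSet C D ⊆ E := by
  rintro z ⟨c, hc, d, hd, rfl⟩
  exact id_add hE (hC hc) (hD hd)

private lemma join_zero_left {D : Set B} : joinSet ({0} : Set B) D ⊆ D := by
  rintro z ⟨c, rfl, d, hd, rfl⟩
  rwa [zero_add]

private lemma join_absorb {X Y : Set B} (hY : IsIdeal Y) :
    joinSet (joinSet X Y) Y ⊆ joinSet X Y := by
  rintro z ⟨w, ⟨x, hx, y1, hy1, rfl⟩, y2, hy2, rfl⟩
  exact ⟨x, hx, y1 + y2, id_add hY hy1 hy2, by rw [add_assoc]⟩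

private lemma join_mem_swap {C D : Set B} {c d : B} (hc : c ∈ C) (hd : d ∈ D)
    (hC : IsIdeal C) : d + c ∈ joinSet C D := by
  refine ⟨d + c + -d, id_addconj hC d hc, d, hd, ?_⟩
  simp [add_assoc]

private lemma isIdeal_join {C D : Set B} (hC : IsIdeal C) (hD : IsIdeal D) :
    IsIdeal (joinSet C D) := by
  have hadd : ∀ {a b : B}, a ∈ joinSet C D → b ∈ joinSet C D → a + b ∈ joinSet C D := by
    rintro a b ⟨c1, hc1, d1, hd1, rfl⟩ ⟨c2, hc2, d2, hd2, rfl⟩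
    refine ⟨c1 + (d1 + c2 + -d1), id_add hC hc1 (id_addconj hC d1 hc2),
            d1 + d2, id_add hD hd1 hd2, ?_⟩
    simp [add_assoc]
  have hneg : ∀ {a : B}, a ∈ joinSet C D → -a ∈ joinSet C D := by
    rintro a ⟨c, hc, d, hd, rfl⟩
    refine ⟨-d + -c + d, ?_, -d, id_neg hD hd, ?_⟩
    · have := id_addconj hC (-d) (id_neg hC hc)
      rwa [neg_neg] at this
    · simp [neg_add_rev, add_assoc]
  refine ⟨fun a _ => Set.mem_univ a, ⟨?_, ?_, ?_, ?_, ?_⟩, ?_, ?_, ?_, ?_⟩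
  · exact ⟨0, id_zero hC, 0, id_zero hD, by simp⟩
  · exact fun a b ha hb => hadd ha hb
  · exact fun a ha => hneg ha
  · -- mul_mem
    rintro a b ha hb
    have e : a * b = a + lamB a b := mul_eq_add_lam a b
    obtain ⟨c2, hc2, d2, hd2, hb'⟩ := hb
    have hlam : lamB a b ∈ joinSet C D := by
      rw [hb', lam_add]
      exact hadd (mem_join_left hD (id_lam hC a hc2)) (mem_join_right hC (id_lam hD a hd2))
    rw [e]
    exact hadd ha hlam
  · -- inv_mem
    rintro a ⟨c, hc, d, hd, rfl⟩
    rw [inv_eq_neg_lam (c + d), lam_add]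
    exact hneg (hadd (mem_join_left hD (id_lam hC _ hc))
      (mem_join_right hC (id_lam hD _ hd)))
  · -- add_conj
    rintro b _ a ⟨c, hc, d, hd, rfl⟩
    refine ⟨b + c + -b, id_addconj hC b hc, b + d + -b, id_addconj hD b hd, ?_⟩
    simp [add_assoc]
  · -- mul_conj
    rintro b _ a ⟨c, hc, d, hd, rfl⟩
    have e : c + d = c * lamB c⁻¹ d := by
      rw [mul_eq_add_lam, lam_lam_inv]
    rw [e]
    have e2 : b * (c * lamB c⁻¹ d) * b⁻¹ =
        (b * c * b⁻¹) * (b * lamB c⁻¹ d * b⁻¹) := by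
      simp [mul_assoc]
    rw [e2, mul_eq_add_lam (b * c * b⁻¹)]
    exact hadd (mem_join_left hD (id_mulconj hC b hc))
      (mem_join_right hC (id_lam hD _ (id_mulconj hD b (id_lam hD c⁻¹ hd))))
  · -- star_mem_left : sbStar b (c+d) ∈ join
    rintro b _ a ⟨c, hc, d, hd, rfl⟩
    have e : sbStar b (c + d) = (lamB b c + -c) + (c + (lamB b d + -d) + -c) := by
      rw [sbStar_eq, lam_add]
      simp [neg_add_rev, add_assoc]
    rw [e]
    have h1 : lamB b c + -c ∈ C := by rw [← sbStar_eq]; exact id_starL hC b hc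
    have h2 : c + (lamB b d + -d) + -c ∈ D := by
      refine id_addconj hD c ?_
      rw [← sbStar_eq]; exact id_starL hD b hd
    exact ⟨_, h1, _, h2, rfl⟩
  · -- star_mem_right : sbStar (c+d) b ∈ join
    rintro a ⟨c, hc, d, hd, rfl⟩ b _
    have hcd : c + d = c * lamB c⁻¹ d := by rw [mul_eq_add_lam, lam_lam_inv]
    have e : sbStar (c + d) b = lamB c (sbStar (lamB c⁻¹ d) b) + sbStar c b := by
      rw [sbStar_eq, sbStar_eq, sbStar_eq, hcd, lam_mul, lam_add, lam_neg]
      simp [add_assoc]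
    rw [e]
    have h1 : lamB c (sbStar (lamB c⁻¹ d) b) ∈ D :=
      id_lam hD c (id_starR hD (id_lam hD c⁻¹ hd) b)
    exact join_mem_swap (id_starR hC hc b) h1 hC

private lemma comm_join_distrib {N X Y : Set B} (hN : IsIdeal N) (hX : IsIdeal X)
    (hY : IsIdeal Y) :
    commIdeal N (joinSet X Y) ⊆ joinSet (commIdeal N X) (commIdeal N Y) := by
  have hL : IsIdeal (joinSet (commIdeal N X) (commIdeal N Y)) :=
    isIdeal_join (isIdeal_commIdeal N X) (isIdeal_commIdeal N Y)
  rw [commIdeal_subset_iff_rel hL]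
  rintro a ha s ⟨x, hx, y, hy, rfl⟩
  set L := joinSet (commIdeal N X) (commIdeal N Y) with hLdef
  have hNX : commIdeal N X ⊆ L := fun z hz => mem_join_left (isIdeal_commIdeal N Y) hz
  have hNY : commIdeal N Y ⊆ L := fun z hz => mem_join_right (isIdeal_commIdeal N X) hz
  obtain ⟨x1, x2, x3⟩ := (commIdeal_subset_iff_rel hL).mp hNX a ha x hx
  obtain ⟨y1, y2, y3⟩ := (commIdeal_subset_iff_rel hL).mp hNY a ha y hy
  have goal1 : cg L (x + y + a) (a + (x + y)) := by
    have e1 : cg L (x + (y + a)) (x + (a + y)) := cg_addl x y1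
    have e2 : cg L (x + a + y) (a + x + y) := cg_addr hL y x1
    rw [add_assoc x y a]
    refine cg_trans hL e1 ?_
    rw [← add_assoc x a y, ← add_assoc a x y]
    exact e2
  have g3 : cg L (a + (x + y)) (a * (x + y)) := by
    have e1 : cg L (a + x + y) (a * x + y) := cg_addr hL y x3
    have e2 : cg L (a * x + (-a + (a + y))) (a * x + (-a + a * y)) :=
      cg_addl (a * x) (cg_addl (-a) y3)
    rw [neg_add_cancel_left] at e2
    rw [SkewBrace.skew_distrib, ← add_assoc a x y]
    exact cg_trans hL e1 e2
  have gsa : cg L ((x + y) * a) (x + y + a) := by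
    have he : lamB x⁻¹ y ∈ Y := id_lam hY x⁻¹ hy
    have hse : x + y = x * lamB x⁻¹ y := by rw [mul_eq_add_lam, lam_lam_inv]
    obtain ⟨e1, e2, e3⟩ := (commIdeal_subset_iff_rel hL).mp hNY a ha _ he
    have cea : cg L (lamB x⁻¹ y * a) (lamB x⁻¹ y + a) :=
      cg_trans hL e2 (cg_trans hL (cg_symm hL e3) (cg_symm hL e1))
    have cxa : cg L (x * a) (x + a) :=
      cg_trans hL x2 (cg_trans hL (cg_symm hL x3) (cg_symm hL x1))
    have step1 : cg L ((x + y) * a) (x * (lamB x⁻¹ y + a)) := by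
      rw [hse, mul_assoc]
      exact cg_mull hL x cea
    have step2 : cg L (x * (lamB x⁻¹ y + a)) (x + y + a) := by
      rw [SkewBrace.skew_distrib, ← hse]
      have e4 : cg L (x + y + (-x + x * a)) (x + y + (-x + (x + a))) :=
        cg_addl _ (cg_addl (-x) cxa)
      rw [neg_add_cancel_left] at e4
      exact e4
    exact cg_trans hL step1 step2
  exact ⟨goal1, cg_trans hL gsa (cg_trans hL goal1 g3), g3⟩

private lemma lower_zero (I : Set B) : lowerCentralB I 0 = I := rfl

private lemma lower_succ (I : Set B) (m : ℕ) :
    lowerCentralB I (m + 1) = commIdeal (lowerCentralB I m) I := rfl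

private lemma isIdeal_lower {N : Set B} (hN : IsIdeal N) (m : ℕ) :
    IsIdeal (lowerCentralB N m) := by
  cases m with
  | zero => exact hN
  | succ m => rw [lower_succ]; exact isIdeal_commIdeal _ _

private def gamB (N T : Set B) : ℕ → Set B
  | 0 => T
  | (m + 1) => commIdeal N (gamB N T m)

private lemma cn_centralises {N : Set B} (hN : IsIdeal N) (hNcn : BCentrallyNilpotent N)
    {Ik Ik1 : Set B} (hIk : IsIdeal Ik) (hIk1 : IsIdeal Ik1) (hlt : Ik ⊂ Ik1)
    (hmin : ∀ K : Set B, IsIdeal K → Ik ⊆ K → K ⊆ Ik1 → K = Ik ∨ K = Ik1) :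
    commIdeal N Ik1 ⊆ Ik := by
  have hJid : IsIdeal (joinSet (commIdeal N Ik1) Ik) :=
    isIdeal_join (isIdeal_commIdeal _ _) hIk
  have hsub1 : commIdeal N Ik1 ⊆ Ik1 := comm_subset_right hIk1 N
  have hIkJ : Ik ⊆ joinSet (commIdeal N Ik1) Ik :=
    fun i hi => mem_join_right (isIdeal_commIdeal _ _) hi
  have hJIk1 : joinSet (commIdeal N Ik1) Ik ⊆ Ik1 := join_subset hIk1 hsub1 hlt.subset
  rcases hmin _ hJid hIkJ hJIk1 with hJ | hJ
  · exact fun z hz => hJ ▸ mem_join_left hIk hz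
  · exfalso
    obtain ⟨n0, hn0⟩ := hNcn
    have hgamid : ∀ m, IsIdeal (gamB N Ik1 m) := by
      intro m; induction m with
      | zero => exact hIk1
      | succ m ih => exact isIdeal_commIdeal _ _
    have hdown : ∀ m, gamB N Ik1 (m + 1) ⊆ lowerCentralB N m := by
      intro m; induction m with
      | zero =>
        show commIdeal N (gamB N Ik1 0) ⊆ N
        exact (comm_symm_subset _ _).trans (comm_subset_right hN Ik1)
      | succ m ih =>
        show commIdeal N (gamB N Ik1 (m + 1)) ⊆ lowerCentralB N (m + 1)
        rw [lower_succ]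
        exact (comm_mono (subset_refl N) ih).trans (comm_symm_subset _ _)
    have hbase : Ik1 ⊆ joinSet (commIdeal N Ik1) Ik := hJ.symm.subset
    have hup : ∀ m, Ik1 ⊆ joinSet (gamB N Ik1 (m + 1)) Ik := by
      intro m; induction m with
      | zero => exact hbase
      | succ m ih =>
        have h1 : commIdeal N Ik1 ⊆ joinSet (gamB N Ik1 (m + 2)) Ik := by
          refine (comm_mono (subset_refl N) ih).trans ?_
          refine (comm_join_distrib hN (hgamid (m + 1)) hIk).trans ?_
          exact join_mono (subset_refl _) (comm_subset_right hIk N)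
        exact hbase.trans ((join_mono h1 (subset_refl Ik)).trans (join_absorb hIk))
    have hcontra : Ik1 ⊆ Ik := by
      refine (hup n0).trans ?_
      refine (join_mono ((hdown n0).trans hn0.subset) (subset_refl Ik)).trans ?_
      exact join_zero_left
    exact hlt.not_subset hcontra

private def Wset (n : ℕ) (I : ℕ → Set B) : Set (Set B) :=
  {J : Set B | IsIdeal J ∧ ∀ k, k < n → commIdeal J (I (k + 1)) ⊆ I k}

private lemma mem_Wset {n : ℕ} {I : ℕ → Set B} {J : Set B} :
    J ∈ Wset n I ↔ IsIdeal J ∧ ∀ k, k < n → commIdeal J (I (k + 1)) ⊆ I k := Iff.rfl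

end FitAux


/-- If `B` has a finite chief series, then `Fit(B)` is the intersection of
the centralisers of the factors of the series. -/
theorem fit_eq_inter_centralisers {B : Type u} [SkewBrace B] (n : ℕ) (I : ℕ → Set B)
    (h0 : I 0 = ({0} : Set B)) (hn : I n = Set.univ)
    (hideal : ∀ k ≤ n, IsIdeal (I k))
    (hchief : ∀ k < n, I k ⊂ I (k + 1) ∧
      ∀ K : Set B, IsIdeal K → I k ⊆ K → K ⊆ I (k + 1) → K = I k ∨ K = I (k + 1)) :
    FitIdeal B = ⋂ k ∈ Finset.range n, factorCentraliser (I (k + 1)) (I k) := by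
  
  classical
  refine Set.Subset.antisymm ?_ ?_
  · -- Fit ⊆ ⋂ centralisers
    have hjoinW : ∀ J₁ ∈ Wset n I, ∀ J₂ ∈ Wset n I, joinSet J₁ J₂ ∈ Wset n I := by
      rintro J₁ ⟨h1id, h1c⟩ J₂ ⟨h2id, h2c⟩
      refine ⟨isIdeal_join h1id h2id, fun k hk => ?_⟩
      have hIk : IsIdeal (I k) := hideal k (le_of_lt hk)
      have hIk1 : IsIdeal (I (k + 1)) := hideal (k + 1) hk
      refine (comm_symm_subset _ _).trans ?_
      refine (comm_join_distrib hIk1 h1id h2id).trans ?_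
      refine (join_mono ((comm_symm_subset _ _).trans (h1c k hk))
        ((comm_symm_subset _ _).trans (h2c k hk))).trans ?_
      exact join_subset hIk (subset_refl _) (subset_refl _)
    have hG : IsIdeal (⋃₀ Wset n I) := by
      refine ⟨fun a _ => Set.mem_univ a, ⟨?_, ?_, ?_, ?_, ?_⟩, ?_, ?_, ?_, ?_⟩
      · exact ⟨{0}, ⟨isIdeal_zero,
          fun k hk => comm_zero_left (hideal k (le_of_lt hk)) _⟩, rfl⟩
      · rintro a b ⟨J₁, hJ₁, ha⟩ ⟨J₂, hJ₂, hb⟩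
        exact ⟨joinSet J₁ J₂, hjoinW J₁ hJ₁ J₂ hJ₂, a, ha, b, hb, rfl⟩
      · rintro a ⟨J, hJ, ha⟩; exact ⟨J, hJ, id_neg hJ.1 ha⟩
      · rintro a b ⟨J₁, hJ₁, ha⟩ ⟨J₂, hJ₂, hb⟩
        refine ⟨joinSet J₁ J₂, hjoinW J₁ hJ₁ J₂ hJ₂, ?_⟩
        rw [mul_eq_add_lam]
        exact ⟨a, ha, lamB a b, id_lam hJ₂.1 a hb, rfl⟩
      · rintro a ⟨J, hJ, ha⟩; exact ⟨J, hJ, id_inv hJ.1 ha⟩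
      · rintro b _ a ⟨J, hJ, ha⟩; exact ⟨J, hJ, id_addconj hJ.1 b ha⟩
      · rintro b _ a ⟨J, hJ, ha⟩; exact ⟨J, hJ, id_mulconj hJ.1 b ha⟩
      · rintro b _ a ⟨J, hJ, ha⟩; exact ⟨J, hJ, id_starL hJ.1 b ha⟩
      · rintro a ⟨J, hJ, ha⟩ b _; exact ⟨J, hJ, id_starR hJ.1 ha b⟩
    have h1 : FitIdeal B ⊆ ⋃₀ Wset n I := by
      refine idealClosure_min hG ?_
      rintro a ⟨N, ⟨hNid, hNcn⟩, haN⟩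
      refine ⟨N, ⟨hNid, fun k hk => ?_⟩, haN⟩
      exact cn_centralises hNid hNcn (hideal k (le_of_lt hk)) (hideal (k + 1) hk)
        (hchief k hk).1 (hchief k hk).2
    refine h1.trans ?_
    rintro a ⟨J, ⟨hJid, hJc⟩, haJ⟩
    refine Set.mem_iInter₂.mpr fun k hk => ?_
    exact ⟨J, ⟨hJid, hJc k (Finset.mem_range.mp hk)⟩, haJ⟩
  · -- ⋂ centralisers ⊆ Fit
    intro a ha
    have hmem : ∀ k, k < n →
        ∃ C : Set B, (IsIdeal C ∧ commIdeal C (I (k + 1)) ⊆ I k) ∧ a ∈ C := by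
      intro k hk
      have h2 : a ∈ factorCentraliser (I (k + 1)) (I k) :=
        Set.mem_iInter₂.mp ha k (Finset.mem_range.mpr hk)
      exact h2
    choose! D hD haD using hmem
    have hEid : ∀ k, IsIdeal (if k < n then D k else Set.univ) := by
      intro k
      split
      · exact (hD k ‹_›).1
      · exact isIdeal_univ
    have hEa : ∀ k, a ∈ (if k < n then D k else Set.univ) := by
      intro k
      split
      · exact haD k ‹_›
      · exact Set.mem_univ a
    have hEc : ∀ k, k < n →
        commIdeal (if k < n then D k else Set.univ) (I (k + 1)) ⊆ I k := by
      intro k hk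
      rw [if_pos hk]
      exact (hD k hk).2
    have hCid : IsIdeal (⋂ k, if k < n then D k else Set.univ) := isIdeal_iInter hEid
    have hclaim : ∀ m, m ≤ n →
        lowerCentralB (⋂ k, if k < n then D k else Set.univ) m ⊆ I (n - m) := by
      intro m
      induction m with
      | zero =>
        intro _
        rw [lower_zero, Nat.sub_zero, hn]
        exact Set.subset_univ _
      | succ m ih =>
        intro hm
        have hm' : m ≤ n := Nat.le_of_succ_le hm
        have e : n - m = n - (m + 1) + 1 := by omega
        have hlt : n - (m + 1) < n := by omega
        rw [lower_succ]
        refine (comm_mono (ih hm') (subset_refl _)).trans ?_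
        refine (comm_symm_subset _ _).trans ?_
        refine (comm_mono (Set.iInter_subset _ (n - (m + 1)))
          (congrArg I e).subset).trans ?_
        exact hEc (n - (m + 1)) hlt
    have hBCN : BCentrallyNilpotent (⋂ k, if k < n then D k else Set.univ) := by
      refine ⟨n, Set.Subset.antisymm ?_ ?_⟩
      · have h3 := hclaim n le_rfl
        rwa [Nat.sub_self, h0] at h3
      · exact Set.singleton_subset_iff.mpr (id_zero (isIdeal_lower hCid n))
    exact subset_idealClosure _ ⟨_, ⟨hCid, hBCN⟩, Set.mem_iInter.mpr hEa⟩
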